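/- Let P₁ ⊆ P₂ be ideals of R. If P₂ is an S-J-ideal of R, then the image P₂/P₁ of P₂ in the quotient ring R/P₁ is an S̄-J-ideal of R/P₁, where S̄ = {s + P₁ : s ∈ S}. -/

import Mathlib

open Ideal

/-- `S` is a multiplicatively closed subset of `R`: `1 ∈ S` and `S` is closed under
multiplication. -/
def MulClosed {R : Type*} [CommRing R] (S : Set R) : Prop :=
  (1 : R) ∈ S ∧ ∀ a ∈ S, ∀ b ∈ S, a * b ∈ S

/-- `I` is an `S`-`𝒥`-ideal associated with `s ∈ S`: for all `a b : R`, `a * b ∈ I`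
implies `s * a ∈ 𝒥(R)` or `s * b ∈ I`, where `𝒥(R)` is the Jacobson radical of `R`. -/
def SJIdealWith {R : Type*} [CommRing R] (S : Set R) (I : Ideal R) (s : R) : Prop :=
  s ∈ S ∧ ∀ a b : R, a * b ∈ I → s * a ∈ (⊥ : Ideal R).jacobson ∨ s * b ∈ I

/-- `I` is an `S`-`𝒥`-ideal: `I` is disjoint from `S` and some `s ∈ S` works. -/
def IsSJIdeal {R : Type*} [CommRing R] (S : Set R) (I : Ideal R) : Prop :=
  S ∩ (I : Set R) = ∅ ∧ ∃ s, SJIdealWith S I s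

section SurjectiveImage

variable {R R' : Type*} [CommRing R] [CommRing R'] {f : R →+* R'}

theorem Ideal.apply_mem_jacobson_bot_of_surjective (hf : Function.Surjective f) {x : R}
    (hx : x ∈ (⊥ : Ideal R).jacobson) : f x ∈ (⊥ : Ideal R').jacobson := by
  have : RingHomSurjective f := ⟨hf⟩
  rw [jacobson_bot] at hx ⊢
  exact Ring.le_comap_jacobson f hx

theorem Ideal.apply_mem_map_iff_of_surjective (hf : Function.Surjective f) {I : Ideal R}
    (hI : RingHom.ker f ≤ I) {x : R} : f x ∈ I.map f ↔ x ∈ I := by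
  rw [← mem_comap, comap_map_of_surjective' f hf, sup_eq_left.mpr hI]

variable {S : Set R} {I : Ideal R}

theorem SJIdealWith.map (hf : Function.Surjective f) (hI : RingHom.ker f ≤ I) {s : R}
    (h : SJIdealWith S I s) : SJIdealWith (f '' S) (I.map f) (f s) := by
  refine ⟨Set.mem_image_of_mem f h.1, hf.forall₂.mpr fun a b hab => ?_⟩
  rw [← map_mul, apply_mem_map_iff_of_surjective hf hI] at hab
  rw [← map_mul, ← map_mul, apply_mem_map_iff_of_surjective hf hI]
  exact (h.2 a b hab).imp_left (apply_mem_jacobson_bot_of_surjective hf)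

theorem IsSJIdeal.map (hf : Function.Surjective f) (hI : RingHom.ker f ≤ I)
    (h : IsSJIdeal S I) : IsSJIdeal (f '' S) (I.map f) := by
  obtain ⟨hdisj, s, hs⟩ := h
  refine ⟨?_, f s, hs.map hf hI⟩
  rw [Set.eq_empty_iff_forall_notMem]
  rintro _ ⟨⟨t, htS, rfl⟩, htI⟩
  rw [SetLike.mem_coe, apply_mem_map_iff_of_surjective hf hI] at htI
  exact hdisj.subset ⟨htS, htI⟩

end SurjectiveImage

theorem stmt15_general {R : Type*} [CommRing R] (S : Set R)
    (P₁ P₂ : Ideal R) (h12 : P₁ ≤ P₂) (hP₂ : IsSJIdeal S P₂) :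
    IsSJIdeal ((Ideal.Quotient.mk P₁) '' S) (P₂.map (Ideal.Quotient.mk P₁)) :=
  hP₂.map Quotient.mk_surjective (by rwa [mk_ker])

theorem stmt15 {R : Type*} [CommRing R] (S : Set R) (hS : MulClosed S)
    (P₁ P₂ : Ideal R) (h12 : P₁ ≤ P₂) (hP₂ : IsSJIdeal S P₂) :
    IsSJIdeal ((Ideal.Quotient.mk P₁) '' S) (P₂.map (Ideal.Quotient.mk P₁)) :=
  stmt15_general S P₁ P₂ h12 hP₂
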